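/- arXiv:1903.02732 — 3 statements merged into one kernel-verified Lean document; each statement's English description precedes it below -/
import Mathlib

section
/- The rational function φ_n(t) := ∏_{i=0}^{n} (1 − t^{d_i})^{(−1)^{n−i}} is a polynomial of degree μ̃_n with integer coefficients; writing φ_n(t) = ∑_{i=0}^{μ̃_n} c′_i t^i, its coefficients satisfy c′_0 = 1 and c′_{μ̃_n − i} = (−1)^{n+1} c′_i for all 0 ≤ i ≤ μ̃_n (equivalently, t^{μ̃_n}·φ_n(1/t) = (−1)^{n+1}·φ_n(t)). -/
open Finset Matrix Polynomial FreeAbelianGroup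

/-- `d k = a 1 * a 2 * ⋯ * a k`, with `d 0 = 1`. -/
def chainD (a : ℕ → ℕ) (k : ℕ) : ℕ := ∏ i ∈ Finset.Icc 1 k, a i

/-- `μ̃ 0 = 1`, `μ̃ k = d k - μ̃ (k-1)`. -/
def chainMu (a : ℕ → ℕ) : ℕ → ℤ
  | 0 => 1
  | k + 1 => (chainD a (k + 1) : ℤ) - chainMu a k

/-- `φ_n(t) = ∏_{i=0}^{n} (1 - t^{d_i})^{(-1)^{n-i}}` as a rational function over `ℚ`. -/
noncomputable def chainPhi (a : ℕ → ℕ) (n : ℕ) : RatFunc ℚ :=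
  ∏ i ∈ Finset.range (n + 1),
    ((1 : RatFunc ℚ) - RatFunc.X ^ (chainD a i)) ^ ((-1 : ℤ) ^ (n - i))

/-- the regular nilpotent `μ × μ` matrix -/
def nilpN (μ : ℕ) : Matrix (Fin μ) (Fin μ) ℚ :=
  Matrix.of fun i j => if (j : ℕ) = (i : ℕ) + 1 then 1 else 0

/-- `χ = ∑_{i=0}^{μ-1} c_i N^i` -/
noncomputable def chiMat (μ : ℕ) (c : ℕ → ℚ) : Matrix (Fin μ) (Fin μ) ℚ :=
  ∑ i ∈ Finset.range μ, c i • (nilpN μ) ^ i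

/-- the companion-type matrix `M₁`: `(M₁)_{i,1} = -c'_i`, `(M₁)_{i,i+1} = 1` (1-based). -/
def M1mat (μ : ℕ) (c' : ℕ → ℚ) : Matrix (Fin μ) (Fin μ) ℚ :=
  Matrix.of fun i j =>
    (if (j : ℕ) = 0 then -c' ((i : ℕ) + 1) else 0) +
    (if (j : ℕ) = (i : ℕ) + 1 then 1 else 0)

/-! ### Auxiliary definitions and lemmas -/

/-- geometric factor `q_k = ∑_{j < a k} t^{d_{k-1} j}`. -/
noncomputable def chainQ (a : ℕ → ℕ) (k : ℕ) : Polynomial ℤ :=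
  ∑ j ∈ Finset.range (a k), Polynomial.X ^ (chainD a (k - 1) * j)

/-- the polynomial `p_n`, satisfying `p_{n+1} p_n = 1 - t^{d_{n+1}}`. -/
noncomputable def chainP (a : ℕ → ℕ) : ℕ → Polynomial ℤ
  | 0 => 1 - Polynomial.X
  | 1 => chainQ a 1
  | (n + 2) => chainQ a (n + 2) * chainP a n

lemma chainD_zero (a : ℕ → ℕ) : chainD a 0 = 1 := by simp [chainD]

lemma chainD_succ (a : ℕ → ℕ) (k : ℕ) : chainD a (k + 1) = chainD a k * a (k + 1) := by
  unfold chainD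
  rw [Finset.prod_Icc_succ_top (by omega)]

lemma chainQ_mul (a : ℕ → ℕ) (k : ℕ) :
    chainQ a (k + 1) * (1 - Polynomial.X ^ chainD a k) =
      1 - Polynomial.X ^ chainD a (k + 1) := by
  have h := geom_sum_mul ((Polynomial.X : Polynomial ℤ) ^ chainD a k) (a (k + 1))
  unfold chainQ
  simp only [Nat.add_sub_cancel]
  calc (∑ j ∈ Finset.range (a (k + 1)), (Polynomial.X : Polynomial ℤ) ^ (chainD a k * j)) *
        (1 - Polynomial.X ^ chainD a k)
      = -((∑ j ∈ Finset.range (a (k + 1)),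
            ((Polynomial.X : Polynomial ℤ) ^ chainD a k) ^ j) *
          ((Polynomial.X : Polynomial ℤ) ^ chainD a k - 1)) := by
        simp only [← pow_mul]; ring
    _ = -(((Polynomial.X : Polynomial ℤ) ^ chainD a k) ^ (a (k + 1)) - 1) := by rw [h]
    _ = 1 - Polynomial.X ^ chainD a (k + 1) := by
        rw [chainD_succ, pow_mul]; ring

lemma chainP_key (a : ℕ → ℕ) :
    ∀ n, chainP a (n + 1) * chainP a n = 1 - Polynomial.X ^ chainD a (n + 1)
  | 0 => by
      have h := chainQ_mul a 0
      rw [chainD_zero, pow_one] at h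
      simpa [chainP] using h
  | (n + 1) => by
      have ih := chainP_key a n
      calc chainP a (n + 2) * chainP a (n + 1)
          = chainQ a (n + 2) * (chainP a (n + 1) * chainP a n) := by
            simp only [chainP]; ring
        _ = chainQ a (n + 2) * (1 - Polynomial.X ^ chainD a (n + 1)) := by rw [ih]
        _ = _ := chainQ_mul a (n + 1)

lemma chainD_pos (a : ℕ → ℕ) (ha : ∀ i, 2 ≤ a i) (k : ℕ) : 0 < chainD a k :=
  Finset.prod_pos fun i _ => by have := ha i; omega

lemma chainQ_coeff_zero (a : ℕ → ℕ) (ha : ∀ i, 2 ≤ a i) (k : ℕ) :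
    (chainQ a k).coeff 0 = 1 := by
  unfold chainQ
  rw [Polynomial.finset_sum_coeff, Finset.sum_eq_single 0]
  · simp
  · intro j hj hj0
    rw [Polynomial.coeff_X_pow, if_neg]
    have := chainD_pos a ha (k - 1)
    intro h
    have := Nat.mul_eq_zero.mp h.symm
    omega
  · intro h
    exact absurd (Finset.mem_range.2 (by have := ha k; omega)) h

lemma chainP_coeff_zero (a : ℕ → ℕ) (ha : ∀ i, 2 ≤ a i) : ∀ n, (chainP a n).coeff 0 = 1
  | 0 => by simp [chainP]
  | 1 => by simpa [chainP] using chainQ_coeff_zero a ha 1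
  | (n + 2) => by
      have h1 := chainQ_coeff_zero a ha (n + 2)
      have h2 := chainP_coeff_zero a ha n
      simp only [chainP, Polynomial.mul_coeff_zero, h1, h2, mul_one]

lemma chainP_ne_zero (a : ℕ → ℕ) (ha : ∀ i, 2 ≤ a i) (n : ℕ) : chainP a n ≠ 0 := by
  intro h
  have := chainP_coeff_zero a ha n
  rw [h] at this
  simp at this

lemma chainMu_bounds (a : ℕ → ℕ) (ha : ∀ i, 2 ≤ a i) :
    ∀ n, 1 ≤ chainMu a n ∧ chainMu a n ≤ chainD a n
  | 0 => by simp [chainMu, chainD]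
  | (n + 1) => by
      obtain ⟨h1, h2⟩ := chainMu_bounds a ha n
      have hd : chainD a (n + 1) = chainD a n * a (n + 1) := chainD_succ a n
      have ha' := ha (n + 1)
      have hdp := chainD_pos a ha n
      have hge : chainD a n * 2 ≤ chainD a (n + 1) := by
        rw [hd]; exact Nat.mul_le_mul_left _ ha'
      simp only [chainMu]
      omega

lemma natDegree_one_sub_X_pow (d : ℕ) :
    ((1 : Polynomial ℤ) - Polynomial.X ^ d).natDegree = d := by
  have h : (1 : Polynomial ℤ) - Polynomial.X ^ d = -(Polynomial.X ^ d - Polynomial.C 1) := by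
    rw [Polynomial.C_1]; ring
  rw [h, Polynomial.natDegree_neg, Polynomial.natDegree_X_pow_sub_C]

lemma chainP_natDegree (a : ℕ → ℕ) (ha : ∀ i, 2 ≤ a i) :
    ∀ n, (chainP a n).natDegree = (chainMu a n).toNat
  | 0 => by
      have := natDegree_one_sub_X_pow 1
      rw [pow_one] at this
      simpa [chainP, chainMu] using this
  | (n + 1) => by
      have ih := chainP_natDegree a ha n
      have hmul : (chainP a (n + 1)).natDegree + (chainP a n).natDegree = chainD a (n + 1) := by
        rw [← Polynomial.natDegree_mul (chainP_ne_zero a ha (n + 1)) (chainP_ne_zero a ha n),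
          chainP_key a n, natDegree_one_sub_X_pow]
      obtain ⟨h1, h2⟩ := chainMu_bounds a ha n
      have h3 : chainD a n ≤ chainD a (n + 1) := by
        rw [chainD_succ]
        have := ha (n + 1)
        have := chainD_pos a ha n
        nlinarith
      rw [ih] at hmul
      simp only [chainMu]
      omega

lemma reverse_one_sub_X_pow (d : ℕ) :
    ((1 : Polynomial ℤ) - Polynomial.X ^ d).reverse = -(1 - Polynomial.X ^ d) := by
  unfold Polynomial.reverse
  rw [natDegree_one_sub_X_pow]
  have h1 : Polynomial.reflect d (1 : Polynomial ℤ) = Polynomial.X ^ d := by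
    rw [← pow_zero (Polynomial.X : Polynomial ℤ), Polynomial.reflect_monomial,
      Polynomial.revAt_le (Nat.zero_le d), Nat.sub_zero]
  have h2 : Polynomial.reflect d ((Polynomial.X : Polynomial ℤ) ^ d) = 1 := by
    rw [Polynomial.reflect_monomial, Polynomial.revAt_le (le_refl d), Nat.sub_self, pow_zero]
  rw [Polynomial.reflect_sub, h1, h2]
  ring

lemma chainP_reverse (a : ℕ → ℕ) (ha : ∀ i, 2 ≤ a i) :
    ∀ n, (chainP a n).reverse = Polynomial.C ((-1 : ℤ) ^ (n + 1)) * chainP a n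
  | 0 => by
      have h := reverse_one_sub_X_pow 1
      rw [pow_one] at h
      simp only [chainP, zero_add, pow_one]
      rw [h, show Polynomial.C (-1 : ℤ) = -1 by simp]
      ring
  | (n + 1) => by
      have ih := chainP_reverse a ha n
      have hkey := chainP_key a n
      have hrev : (chainP a (n + 1)).reverse * (chainP a n).reverse
          = -(chainP a (n + 1) * chainP a n) := by
        rw [← Polynomial.reverse_mul_of_domain, hkey, reverse_one_sub_X_pow]
      rw [ih] at hrev
      have hc : Polynomial.C ((-1 : ℤ) ^ (n + 1)) * Polynomial.C ((-1 : ℤ) ^ (n + 1))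
          = (1 : Polynomial ℤ) := by
        rw [← Polynomial.C_mul, ← pow_add, Even.neg_one_pow ⟨n + 1, by ring⟩, Polynomial.C_1]
      have hneg : Polynomial.C ((-1 : ℤ) ^ (n + 1 + 1)) = -Polynomial.C ((-1 : ℤ) ^ (n + 1)) := by
        rw [pow_succ]; simp
      have h5 : (chainP a (n + 1)).reverse * chainP a n
          = Polynomial.C ((-1 : ℤ) ^ (n + 1 + 1)) * chainP a (n + 1) * chainP a n := by
        rw [hneg]
        linear_combination Polynomial.C ((-1 : ℤ) ^ (n + 1)) * hrev -
          ((chainP a (n + 1)).reverse * chainP a n) * hc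
      exact mul_right_cancel₀ (chainP_ne_zero a ha n) h5

/-- the canonical embedding `ℤ[t] → ℚ(t)`. -/
noncomputable def intPolyToRatFunc : Polynomial ℤ →+* RatFunc ℚ :=
  (algebraMap (Polynomial ℚ) (RatFunc ℚ)).comp (Polynomial.mapRingHom (Int.castRingHom ℚ))

lemma intPolyToRatFunc_inj : Function.Injective intPolyToRatFunc :=
  (IsFractionRing.injective (Polynomial ℚ) (RatFunc ℚ)).comp
    (Polynomial.map_injective (Int.castRingHom ℚ) Int.cast_injective)

lemma intPolyToRatFunc_X : intPolyToRatFunc Polynomial.X = RatFunc.X := by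
  rw [intPolyToRatFunc, RingHom.comp_apply, Polynomial.coe_mapRingHom, Polynomial.map_X,
    RatFunc.algebraMap_X]

lemma chainPhi_succ (a : ℕ → ℕ) (n : ℕ) :
    chainPhi a (n + 1) = (1 - RatFunc.X ^ chainD a (n + 1)) * (chainPhi a n)⁻¹ := by
  unfold chainPhi
  rw [Finset.prod_range_succ]
  have h1 : ∀ i ∈ Finset.range (n + 1),
      ((1 : RatFunc ℚ) - RatFunc.X ^ chainD a i) ^ ((-1 : ℤ) ^ (n + 1 - i))
        = (((1 : RatFunc ℚ) - RatFunc.X ^ chainD a i) ^ ((-1 : ℤ) ^ (n - i)))⁻¹ := by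
    intro i hi
    have hi' : n + 1 - i = (n - i) + 1 := by
      have := Finset.mem_range.1 hi; omega
    rw [hi', pow_succ, mul_neg_one, _root_.zpow_neg]
  rw [Finset.prod_congr rfl h1, Finset.prod_inv_distrib, Nat.sub_self, pow_zero, zpow_one,
    mul_comm]

lemma intPolyToRatFunc_chainP (a : ℕ → ℕ) (ha : ∀ i, 2 ≤ a i) :
    ∀ n, intPolyToRatFunc (chainP a n) = chainPhi a n
  | 0 => by
      unfold chainPhi
      rw [Finset.prod_range_one, chainD_zero, pow_one, Nat.sub_self, pow_zero, zpow_one]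
      simp only [chainP, map_sub, _root_.map_one, intPolyToRatFunc_X]
  | (n + 1) => by
      have ih := intPolyToRatFunc_chainP a ha n
      have hne : intPolyToRatFunc (chainP a n) ≠ 0 := by
        intro h
        exact chainP_ne_zero a ha n (intPolyToRatFunc_inj (by rw [h, map_zero]))
      have hF : intPolyToRatFunc (chainP a (n + 1)) * intPolyToRatFunc (chainP a n)
          = 1 - RatFunc.X ^ chainD a (n + 1) := by
        rw [← _root_.map_mul, chainP_key a n, map_sub, _root_.map_one, map_pow, intPolyToRatFunc_X]
      rw [chainPhi_succ, ← ih, eq_mul_inv_iff_mul_eq₀ hne]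
      exact hF

/-- `φ_n(t)` is a polynomial of degree `μ̃_n` with integer coefficients,
constant coefficient `c'_0 = 1`, and palindromic coefficients
`c'_{μ̃_n - i} = (-1)^{n+1} c'_i`. -/
theorem stmt_0 (n : ℕ) (hn : 1 ≤ n) (a : ℕ → ℕ) (ha : ∀ i, 1 ≤ i → i ≤ n → 2 ≤ a i) :
    ∃ p : Polynomial ℤ,
      algebraMap (Polynomial ℚ) (RatFunc ℚ) (p.map (Int.castRingHom ℚ)) = chainPhi a n ∧
      p.natDegree = (chainMu a n).toNat ∧
      p.coeff 0 = 1 ∧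
      ∀ i, i ≤ (chainMu a n).toNat →
        p.coeff ((chainMu a n).toNat - i) = (-1) ^ (n + 1) * p.coeff i := by
  set b : ℕ → ℕ := fun i => if 1 ≤ i ∧ i ≤ n then a i else 2 with hb
  have hb2 : ∀ i, 2 ≤ b i := by
    intro i
    by_cases h : 1 ≤ i ∧ i ≤ n
    · simpa [hb, h] using ha i h.1 h.2
    · simp [hb, h]
  have hD : ∀ k, k ≤ n → chainD b k = chainD a k := by
    intro k hk
    unfold chainD
    refine Finset.prod_congr rfl fun i hi => ?_
    rw [Finset.mem_Icc] at hi
    simp only [hb]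
    rw [if_pos ⟨hi.1, le_trans hi.2 hk⟩]
  have hMu : ∀ k, k ≤ n → chainMu b k = chainMu a k := by
    intro k
    induction k with
    | zero => intro _; rfl
    | succ m ihm =>
        intro hk
        simp only [chainMu, hD (m + 1) hk, ihm (by omega)]
  have hPhi : chainPhi b n = chainPhi a n := by
    unfold chainPhi
    refine Finset.prod_congr rfl fun i hi => ?_
    rw [Finset.mem_range] at hi
    rw [hD i (by omega)]
  refine ⟨chainP b n, ?_, ?_, ?_, ?_⟩
  · rw [← hPhi, ← intPolyToRatFunc_chainP b hb2 n]
    rfl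
  · rw [chainP_natDegree b hb2 n, hMu n le_rfl]
  · exact chainP_coeff_zero b hb2 n
  · intro i hi
    have hdeg := chainP_natDegree b hb2 n
    rw [hMu n le_rfl] at hdeg
    have hcoef := congrArg (fun q => Polynomial.coeff q i) (chainP_reverse b hb2 n)
    simp only [Polynomial.coeff_reverse, Polynomial.coeff_C_mul, hdeg,
      Polynomial.revAt_le hi] at hcoef
    exact hcoef
end

section
/- Let p(t) = ∑_{i=0}^{μ} c′_i t^i ∈ ℚ[t] be any polynomial of degree μ ≥ 1 with p(0) = 1 satisfying t^{μ}·p(1/t) = ε·p(t) for some ε ∈ {1, −1}. Let c_i be the coefficients of the power series 1/p(t) = ∑_{i≥0} c_i t^i ∈ ℚ[[t]], let N be the μ × μ matrix with (N)_{i,i+1} = 1 and all other entries 0, set χ := ∑_{i=0}^{μ−1} c_i N^i, and let M_1 be the μ × μ matrix whose (i,1)-entry is −c′_i for 1 ≤ i ≤ μ, whose (i,i+1)-entries are 1 for 1 ≤ i ≤ μ − 1, and all other entries 0. Then χ · M_1^{μ} = −ε · χ^T. -/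
/-!
Extend the coefficients of `1/p` by zero to `ĉ : ℤ → ℚ`; then `χ` is the Toeplitz matrix with
symbol `ĉ`. Right multiplication by `M₁` shifts the symbol of a Toeplitz matrix by one, as long as
the symbol satisfies the linear recurrence with characteristic polynomial `p` on all of `ℤ`. The
symbol `ĉ` violates it at a single point, but `f n = ĉ n - ε ĉ (-n - μ)` does not: the second term
comes from the expansion of `1/p` at infinity, and palindromy makes the two defects cancel. On the
window `-μ < n < μ` seen by `μ × μ` matrices, `f` agrees with `ĉ` and `f (· - μ)` agrees with
`-ε ĉ (-·)`, the symbol of `-ε χᵀ`.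
-/

open Finset Matrix Polynomial FreeAbelianGroup

def extendByZero {R : Type*} [Zero R] (c : ℕ → R) (n : ℤ) : R :=
  if 0 ≤ n then c n.toNat else 0

@[simp]
lemma extendByZero_natCast {R : Type*} [Zero R] (c : ℕ → R) (n : ℕ) :
    extendByZero c n = c n := by
  simp [extendByZero]

lemma extendByZero_of_neg {R : Type*} [Zero R] (c : ℕ → R) {n : ℤ} (hn : n < 0) :
    extendByZero c n = 0 := by
  simp [extendByZero, not_le.mpr hn]

section InverseCoefficients

variable {K : Type*} [Field K] {p : K[X]} {c : ℕ → K}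

lemma sum_range_coeff_mul_inv_coeff (hp0 : p.coeff 0 ≠ 0)
    (hc : ∀ i, c i = PowerSeries.coeff i (p : PowerSeries K)⁻¹) (n : ℕ) :
    ∑ m ∈ range (n + 1), p.coeff m * c (n - m) = if n = 0 then 1 else 0 := by
  have hinv : (p : PowerSeries K) * (p : PowerSeries K)⁻¹ = 1 :=
    PowerSeries.mul_inv_cancel _ (by simpa using hp0)
  rw [← PowerSeries.coeff_one, ← hinv, PowerSeries.coeff_mul,
    Finset.Nat.sum_antidiagonal_eq_sum_range_succ_mk]
  simp [hc]

lemma sum_coeff_mul_extendByZero_sub {μ : ℕ} (hp0 : p.coeff 0 ≠ 0) (hdeg : p.natDegree ≤ μ)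
    (hc : ∀ i, c i = PowerSeries.coeff i (p : PowerSeries K)⁻¹) (n : ℤ) :
    ∑ m ∈ range (μ + 1), p.coeff m * extendByZero c (n - m) = if n = 0 then 1 else 0 := by
  rcases lt_or_ge n 0 with hn | hn
  · rw [if_neg hn.ne]
    exact sum_eq_zero fun m _ => by rw [extendByZero_of_neg _ (by omega), mul_zero]
  lift n to ℕ using hn
  calc ∑ m ∈ range (μ + 1), p.coeff m * extendByZero c (n - m)
      = ∑ m ∈ range (μ + n + 1), p.coeff m * extendByZero c (n - m) :=
        sum_subset (range_subset_range.mpr (by omega)) fun m _ hm => by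
          rw [coeff_eq_zero_of_natDegree_lt (by simp at hm; omega), zero_mul]
    _ = ∑ m ∈ range (n + 1), p.coeff m * extendByZero c (n - m) :=
        (sum_subset (range_subset_range.mpr (by omega)) fun m _ hm => by
          rw [extendByZero_of_neg _ (by simp at hm; omega), mul_zero]).symm
    _ = ∑ m ∈ range (n + 1), p.coeff m * c (n - m) :=
        sum_congr rfl fun m hm => by
          rw [← Nat.cast_sub (by simp at hm; omega), extendByZero_natCast]
    _ = if (n : ℤ) = 0 then 1 else 0 := by
        simp only [sum_range_coeff_mul_inv_coeff hp0 hc, Nat.cast_eq_zero]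

lemma sum_coeff_mul_extendByZero_add {μ : ℕ} {ε : K} (hp0 : p.coeff 0 ≠ 0)
    (hdeg : p.natDegree ≤ μ) (hpal : ∀ i, i ≤ μ → p.coeff (μ - i) = ε * p.coeff i)
    (hc : ∀ i, c i = PowerSeries.coeff i (p : PowerSeries K)⁻¹) (n : ℤ) :
    ∑ m ∈ range (μ + 1), p.coeff m * extendByZero c (n + m) =
      ε * if n + μ = 0 then 1 else 0 := by
  rw [← sum_range_reflect, ← sum_coeff_mul_extendByZero_sub hp0 hdeg hc, mul_sum]
  refine sum_congr rfl fun m hm => ?_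
  rw [mem_range] at hm
  rw [Nat.add_sub_cancel, hpal m (by omega), Nat.cast_sub (by omega), mul_assoc]
  ring_nf

lemma recurrence_extendByZero_sub_reflect {μ : ℕ} {ε : K} (hp0 : p.coeff 0 ≠ 0)
    (hdeg : p.natDegree ≤ μ) (hpal : ∀ i, i ≤ μ → p.coeff (μ - i) = ε * p.coeff i)
    (hc : ∀ i, c i = PowerSeries.coeff i (p : PowerSeries K)⁻¹) (n : ℤ) :
    ∑ m ∈ range (μ + 1),
      p.coeff m * (extendByZero c (n + m) - ε * extendByZero c (-(n + m) - μ)) = 0 := by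
  have hreflect := sum_coeff_mul_extendByZero_sub hp0 hdeg hc (-n - μ)
  simp only [mul_sub, sum_sub_distrib, sum_coeff_mul_extendByZero_add hp0 hdeg hpal hc n,
    mul_left_comm _ ε, ← mul_sum, show ∀ m : ℤ, -(n + m) - μ = -n - μ - m from fun m => by ring,
    hreflect, show -n - μ = 0 ↔ n + μ = 0 by omega, sub_self]

end InverseCoefficients

def toeplitz {R : Type*} (μ : ℕ) (f : ℤ → R) : Matrix (Fin μ) (Fin μ) R :=
  Matrix.of fun i j => f ((j : ℤ) - i)

lemma toeplitz_congr {R : Type*} {μ : ℕ} {f g : ℤ → R}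
    (h : ∀ n : ℤ, -μ < n → n < μ → f n = g n) : toeplitz μ f = toeplitz μ g := by
  ext i j
  exact h _ (by omega) (by omega)

lemma transpose_toeplitz {R : Type*} (μ : ℕ) (f : ℤ → R) :
    (toeplitz μ f)ᵀ = toeplitz μ (fun n => f (-n)) := by
  ext i j
  simp only [toeplitz, transpose_apply, of_apply, neg_sub]

lemma nilpN_pow_apply (μ k : ℕ) (i j : Fin μ) :
    (nilpN μ ^ k) i j = if (j : ℕ) = i + k then 1 else 0 := by
  induction k generalizing j with
  | zero => simp [one_apply, Fin.ext_iff, eq_comm]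
  | succ k ih =>
    rw [pow_succ, mul_apply]
    simp only [ih]
    simp only [nilpN, of_apply, mul_ite, mul_one, mul_zero]
    by_cases hik : (i : ℕ) + k < μ
    · rw [sum_eq_single ⟨i + k, hik⟩ (fun b _ hb => by simp [Fin.ext_iff] at hb ⊢; omega)
        (by simp)]
      simp [add_assoc]
    · rw [sum_eq_zero (fun b _ => by simp; omega)]
      simp; omega

lemma chiMat_eq_toeplitz (μ : ℕ) (c : ℕ → ℚ) : chiMat μ c = toeplitz μ (extendByZero c) := by
  ext i j
  simp only [chiMat, Matrix.sum_apply, Matrix.smul_apply, nilpN_pow_apply, smul_eq_mul, mul_ite,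
    mul_one, mul_zero, toeplitz, of_apply]
  by_cases hij : (i : ℕ) ≤ j
  · rw [sum_eq_single (j - i : ℕ) (fun b _ hb => by simp; omega) (by simp; omega)]
    simp [extendByZero, hij]
  · rw [sum_eq_zero (fun b _ => by simp; omega)]
    simp [extendByZero]; omega

lemma toeplitz_mul_M1mat {μ : ℕ} {c' : ℕ → ℚ} (hc'0 : c' 0 = 1) {f : ℤ → ℚ}
    (hrec : ∀ n : ℤ, ∑ m ∈ range (μ + 1), c' m * f (n + m) = 0) :
    toeplitz μ f * M1mat μ c' = toeplitz μ (fun n => f (n - 1)) := by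
  ext i j
  simp only [mul_apply, toeplitz, M1mat, of_apply, mul_add, sum_add_distrib, mul_ite,
    mul_zero, mul_one]
  by_cases hj : (j : ℕ) = 0
  · have h := hrec (-i - 1)
    simp only [sum_range_succ', hc'0, Nat.cast_add, Nat.cast_one, Nat.cast_zero,
      show ∀ k : ℤ, -(i : ℤ) - 1 + (k + 1) = k - i from fun k => by ring, add_zero,
      mul_comm (c' _)] at h
    simp [hj, Fin.sum_univ_eq_sum_range (fun m => f (m - i) * c' (m + 1))]
    linear_combination -h
  · have hj' : (j : ℕ) - 1 < μ := by omega
    simp only [hj, if_false, sum_const_zero, zero_add]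
    rw [sum_eq_single ⟨j - 1, hj'⟩ (fun b _ hb => by simp [Fin.ext_iff] at hb ⊢; omega)
      (by simp), if_pos (by simp; omega)]
    congr 1
    push_cast [Nat.cast_sub (Nat.one_le_iff_ne_zero.mpr hj)]
    ring

lemma toeplitz_mul_M1mat_pow {μ : ℕ} {c' : ℕ → ℚ} (hc'0 : c' 0 = 1) {f : ℤ → ℚ}
    (hrec : ∀ n : ℤ, ∑ m ∈ range (μ + 1), c' m * f (n + m) = 0) (k : ℕ) :
    toeplitz μ f * M1mat μ c' ^ k = toeplitz μ (fun n => f (n - k)) := by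
  induction k with
  | zero => simp
  | succ k ih =>
    rw [pow_succ, ← mul_assoc, ih, toeplitz_mul_M1mat hc'0 fun n => by
      simpa only [sub_add_eq_add_sub] using hrec (n - k)]
    congr 1
    ext n
    push_cast
    ring_nf

theorem stmt_8_general (μ : ℕ) (p : Polynomial ℚ)
    (hdeg : p.natDegree = μ) (hp0 : p.coeff 0 = 1)
    (ε : ℚ)
    (hpal : ∀ i, i ≤ μ → p.coeff (μ - i) = ε * p.coeff i)
    (c : ℕ → ℚ)
    (hc : ∀ i, c i = PowerSeries.coeff i ((p : PowerSeries ℚ)⁻¹)) :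
    chiMat μ c * (M1mat μ (fun i => p.coeff i)) ^ μ = (-ε) • (chiMat μ c)ᵀ := by
  set f : ℤ → ℚ := fun n => extendByZero c n - ε * extendByZero c (-n - μ)
  have hrec : ∀ n : ℤ, ∑ m ∈ range (μ + 1), p.coeff m * f (n + m) = 0 :=
    recurrence_extendByZero_sub_reflect (by simp [hp0]) hdeg.le hpal hc
  calc chiMat μ c * M1mat μ (fun i => p.coeff i) ^ μ
      = toeplitz μ f * M1mat μ (fun i => p.coeff i) ^ μ := by
        rw [chiMat_eq_toeplitz, toeplitz_congr fun n hn _ => ?_]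
        simp [f, extendByZero_of_neg c (by omega : -n - μ < 0)]
    _ = toeplitz μ (fun n => f (n - μ)) := toeplitz_mul_M1mat_pow hp0 hrec μ
    _ = toeplitz μ (fun n => -ε * extendByZero c (-n)) := toeplitz_congr fun n _ hn => by
        simp [f, extendByZero_of_neg c (by omega : n - μ < 0)]
    _ = (-ε) • (chiMat μ c)ᵀ := by
        rw [chiMat_eq_toeplitz, transpose_toeplitz]
        rfl

/-- the general linear-algebraic identity. For any `p ∈ ℚ[t]` of degree
`μ ≥ 1` with `p(0) = 1` and `t^μ · p(1/t) = ε · p(t)` for some `ε ∈ {1, −1}` (i.e.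
`p.coeff (μ − i) = ε · p.coeff i` for all `i ≤ μ`), one has `χ · M₁^μ = −ε · χᵀ`. -/
theorem stmt_8 (μ : ℕ) (hμ : 1 ≤ μ) (p : Polynomial ℚ)
    (hdeg : p.natDegree = μ) (hp0 : p.coeff 0 = 1)
    (ε : ℚ) (hε : ε = 1 ∨ ε = -1)
    (hpal : ∀ i, i ≤ μ → p.coeff (μ - i) = ε * p.coeff i)
    (c : ℕ → ℚ)
    (hc : ∀ i, c i = PowerSeries.coeff i ((p : PowerSeries ℚ)⁻¹)) :
    chiMat μ c * (M1mat μ (fun i => p.coeff i)) ^ μ = (-ε) • (chiMat μ c)ᵀ :=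
  stmt_8_general μ p hdeg hp0 ε hpal c hc
end

section
/- Suppose n = 2m with m ≥ 1. Then, with N the μ̃_{2m} × μ̃_{2m} regular nilpotent matrix, one has ∏_{k=1}^{m} ( ∑_{j=0}^{a_{2k−1}−1} N^{j·d_{2k−2}} ) = χ_{2m}; equivalently, φ_{2m}(N) · ∏_{k=1}^{m} ( ∑_{j=0}^{a_{2k−1}−1} N^{j·d_{2k−2}} ) = 𝟏. -/
open Finset Matrix Polynomial FreeAbelianGroup

lemma chainD_ne_zero {a : ℕ → ℕ} {k : ℕ} (ha : ∀ i ∈ Icc 1 k, a i ≠ 0) : chainD a k ≠ 0 :=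
  Finset.prod_ne_zero_iff.mpr ha

lemma chainMu_mem_Icc {a : ℕ → ℕ} {k : ℕ} (ha : ∀ i ∈ Icc 1 k, 2 ≤ a i) :
    1 ≤ chainMu a k ∧ chainMu a k ≤ chainD a k := by
  induction k with
  | zero => simp [chainMu, chainD]
  | succ k ih =>
    obtain ⟨h1, h2⟩ := ih fun i hi => ha i (Icc_subset_Icc_right k.le_succ hi)
    have hd : 2 * chainD a k ≤ chainD a (k + 1) := by
      rw [chainD_succ, mul_comm]
      exact Nat.mul_le_mul_left _ (ha _ (by simp))
    simp only [chainMu]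
    omega

lemma nilpN_pow (μ k : ℕ) :
    nilpN μ ^ k = Matrix.of fun i j : Fin μ => if (j : ℕ) = i + k then (1 : ℚ) else 0 := by
  induction k with
  | zero => ext i j; simp [Matrix.one_apply, eq_comm, Fin.ext_iff]
  | succ k ih =>
    ext i j
    rw [pow_succ, ih, mul_apply]
    by_cases h : (i : ℕ) + k < μ
    · rw [Fintype.sum_eq_single ⟨i + k, h⟩ fun l hl => by simp [Fin.ext_iff] at hl; simp [hl]]
      simp [nilpN, add_assoc]
    · rw [of_apply, if_neg (by omega)]
      refine Finset.sum_eq_zero fun l _ => ?_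
      have := l.2
      simp only [of_apply, nilpN, mul_ite, mul_one, mul_zero, ite_eq_right_iff]
      omega

lemma nilpN_pow_eq_zero {μ k : ℕ} (hk : μ ≤ k) : nilpN μ ^ k = 0 := by
  ext i j
  rw [nilpN_pow, of_apply, if_neg (by omega), Matrix.zero_apply]

lemma chainPhi_zero (a : ℕ → ℕ) : chainPhi a 0 = 1 - RatFunc.X := by
  simp [chainPhi, chainD]

lemma chainPhi_add_two (a : ℕ → ℕ) (n : ℕ) :
    chainPhi a (n + 2) = chainPhi a n * (1 - RatFunc.X ^ chainD a (n + 1))⁻¹ *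
      (1 - RatFunc.X ^ chainD a (n + 2)) := by
  have hsign : ∀ i ∈ range (n + 1), ((-1 : ℤ) ^ (n + 2 - i)) = (-1) ^ (n - i) := fun i hi => by
    rw [show n + 2 - i = n - i + 2 by grind, pow_add, neg_one_sq, mul_one]
  rw [chainPhi, chainPhi, prod_range_succ, prod_range_succ,
    prod_congr rfl fun i hi => by rw [hsign i hi]]
  simp

lemma one_sub_X_pow_chainD_mul_geom_sum {R : Type*} [CommRing R] (a : ℕ → ℕ) (k : ℕ) :
    (1 - X ^ chainD a k : R[X]) * ∑ j ∈ range (a (k + 1)), X ^ (j * chainD a k) =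
      1 - X ^ chainD a (k + 1) := by
  simp_rw [mul_comm _ (chainD a k), pow_mul]
  rw [mul_neg_geom_sum, chainD_succ, pow_mul]

lemma RatFunc.one_sub_X_pow_ne_zero {K : Type*} [Field K] {d : ℕ} (hd : d ≠ 0) :
    (1 - RatFunc.X ^ d : RatFunc K) ≠ 0 := by
  rw [← neg_ne_zero, neg_sub]
  intro h
  apply X_pow_sub_C_ne_zero (Nat.pos_of_ne_zero hd) (1 : K)
  apply RatFunc.algebraMap_injective K
  simpa using h

noncomputable def chiPoly (a : ℕ → ℕ) (m : ℕ) : ℚ[X] :=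
  ∏ k ∈ range m, ∑ j ∈ range (a (2 * k + 1)), X ^ (j * chainD a (2 * k))

lemma chainPhi_mul_chiPoly (a : ℕ → ℕ) (m : ℕ) (ha : ∀ i ∈ Icc 1 (2 * m), a i ≠ 0) :
    chainPhi a (2 * m) * algebraMap ℚ[X] (RatFunc ℚ) (chiPoly a m) =
      1 - RatFunc.X ^ chainD a (2 * m) := by
  induction m with
  | zero => simp [chiPoly, chainPhi_zero, chainD]
  | succ m ih =>
    have hodd : chainD a (2 * m + 1) ≠ 0 :=
      chainD_ne_zero fun i hi => ha i (Icc_subset_Icc_right (by omega) hi)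
    have hgeom := congrArg (algebraMap ℚ[X] (RatFunc ℚ))
      (one_sub_X_pow_chainD_mul_geom_sum (R := ℚ) a (2 * m))
    simp only [map_mul, map_sub, map_one, map_pow, RatFunc.algebraMap_X] at hgeom
    rw [chiPoly, prod_range_succ, ← chiPoly, map_mul, mul_add, mul_one, chainPhi_add_two]
    calc _ = chainPhi a (2 * m) * algebraMap ℚ[X] (RatFunc ℚ) (chiPoly a m) *
          algebraMap ℚ[X] (RatFunc ℚ) (∑ j ∈ range (a (2 * m + 1)), X ^ (j * chainD a (2 * m))) *
          (1 - RatFunc.X ^ chainD a (2 * m + 1))⁻¹ * (1 - RatFunc.X ^ chainD a (2 * m + 2)) := by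
          ring
      _ = 1 - RatFunc.X ^ chainD a (2 * m + 2) := by
          rw [ih fun i hi => ha i (Icc_subset_Icc_right (by omega) hi), hgeom,
            mul_inv_cancel₀ (RatFunc.one_sub_X_pow_ne_zero hodd), one_mul]

section TruncatedEvaluation

variable {R A : Type*} [CommRing R] [Ring A] [Algebra R A] {x : A} {n : ℕ}

lemma aeval_trunc_coe_of_pow_eq_zero (hx : x ^ n = 0) (q : R[X]) :
    aeval x (PowerSeries.trunc n (q : PowerSeries R)) = aeval x q := by
  obtain ⟨r, hr⟩ : X ^ n ∣ q - PowerSeries.trunc n (q : PowerSeries R) :=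
    X_pow_dvd_iff.mpr fun d hd => by
      rw [coeff_sub, PowerSeries.coeff_trunc, if_pos hd, coeff_coe, sub_self]
  rw [← sub_eq_zero, ← map_sub, ← neg_sub, hr, map_neg, map_mul, map_pow, aeval_X, hx,
    zero_mul, neg_zero]

lemma aeval_trunc_mul_of_pow_eq_zero (hx : x ^ n = 0) (f g : PowerSeries R) :
    aeval x (PowerSeries.trunc n (f * g)) =
      aeval x (PowerSeries.trunc n f) * aeval x (PowerSeries.trunc n g) := by
  rw [← PowerSeries.trunc_trunc_mul_trunc, ← Polynomial.coe_mul,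
    aeval_trunc_coe_of_pow_eq_zero hx, map_mul]

lemma aeval_trunc (f : PowerSeries R) :
    aeval x (PowerSeries.trunc n f) = ∑ i ∈ range n, PowerSeries.coeff i f • x ^ i := by
  simp only [PowerSeries.trunc_apply, range_eq_Ico, map_sum, aeval_monomial, Algebra.smul_def]

end TruncatedEvaluation

lemma aeval_nilpN_mul_chiMat {μ : ℕ} {p : ℚ[X]} (hp : p.coeff 0 ≠ 0) {c : ℕ → ℚ}
    (hc : ∀ i, c i = PowerSeries.coeff i ((p : PowerSeries ℚ)⁻¹)) :
    aeval (nilpN μ) p * chiMat μ c = 1 := by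
  cases μ with
  | zero => exact Subsingleton.elim _ _
  | succ μ =>
    have hN := nilpN_pow_eq_zero (le_refl (μ + 1))
    have hχ : chiMat (μ + 1) c =
        aeval (nilpN (μ + 1)) (PowerSeries.trunc (μ + 1) (p : PowerSeries ℚ)⁻¹) := by
      simp [chiMat, aeval_trunc, hc]
    rw [hχ, ← aeval_trunc_coe_of_pow_eq_zero hN, ← aeval_trunc_mul_of_pow_eq_zero hN,
      PowerSeries.mul_inv_cancel _ (by simpa using hp), PowerSeries.trunc_one, map_one]

lemma aeval_chiPoly {A : Type*} [Ring A] [Algebra ℚ A] (x : A) (a : ℕ → ℕ) (m : ℕ) :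
    aeval x (chiPoly a m) =
      ((List.range m).map fun k =>
        ∑ j ∈ range (a (2 * k + 1)), x ^ (j * chainD a (2 * k))).prod := by
  rw [chiPoly, prod_eq_multiset_prod, range_val, Multiset.range, Multiset.map_coe,
    Multiset.prod_coe, map_list_prod, List.map_map]
  simp only [Function.comp_def, map_sum, map_pow, aeval_X]

theorem stmt_9_general (m : ℕ) (n : ℕ) (hn : n = 2 * m)
    (a : ℕ → ℕ) (ha : ∀ i, 1 ≤ i → i ≤ n → 2 ≤ a i)
    (p : Polynomial ℚ)
    (hp : algebraMap (Polynomial ℚ) (RatFunc ℚ) p = chainPhi a n)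
    (c : ℕ → ℚ)
    (hc : ∀ i, c i = PowerSeries.coeff i ((p : PowerSeries ℚ)⁻¹)) :
    ((List.range m).map (fun k =>
        ∑ j ∈ Finset.range (a (2 * k + 1)),
          (nilpN (chainMu a n).toNat) ^ (j * chainD a (2 * k)))).prod
      = chiMat (chainMu a n).toNat c ∧
    Polynomial.aeval (nilpN (chainMu a n).toNat) p *
        ((List.range m).map (fun k =>
          ∑ j ∈ Finset.range (a (2 * k + 1)),
            (nilpN (chainMu a n).toNat) ^ (j * chainD a (2 * k)))).prod
      = 1 := by
  subst hn
  have ha' : ∀ i ∈ Icc 1 (2 * m), 2 ≤ a i := fun i hi => ha i (mem_Icc.1 hi).1 (mem_Icc.1 hi).2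
  have hd : chainD a (2 * m) ≠ 0 := chainD_ne_zero fun i hi => by have := ha' i hi; omega
  have hpG : p * chiPoly a m = 1 - X ^ chainD a (2 * m) := RatFunc.algebraMap_injective ℚ <| by
    rw [map_mul, hp, chainPhi_mul_chiPoly a m fun i hi => by have := ha' i hi; omega]
    simp
  have hp0 : p.coeff 0 ≠ 0 := by
    apply left_ne_zero_of_mul (b := (chiPoly a m).coeff 0)
    rw [← mul_coeff_zero, hpG]
    simp [hd.symm]
  set N := nilpN (chainMu a (2 * m)).toNat
  have hNd : N ^ chainD a (2 * m) = 0 := nilpN_pow_eq_zero (by have := chainMu_mem_Icc ha'; omega)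
  have hpG_N : aeval N p * aeval N (chiPoly a m) = 1 := by
    rw [← map_mul, hpG, map_sub, map_one, map_pow, aeval_X, hNd, sub_zero]
  rw [← aeval_chiPoly]
  exact ⟨left_inv_eq_right_inv (mul_eq_one_comm.mp hpG_N) (aeval_nilpN_mul_chiMat hp0 hc), hpG_N⟩

/-- for `n = 2m`, `m ≥ 1`:
`∏_{k=1}^{m} (∑_{j=0}^{a_{2k−1}−1} N^{j·d_{2k−2}}) = χ_{2m}`; equivalently
`φ_{2m}(N) · ∏_{k=1}^{m} (∑_{j=0}^{a_{2k−1}−1} N^{j·d_{2k−2}}) = 𝟏`.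
(The product over `k = 1, …, m` is reindexed as `k = 0, …, m−1`, taken as an ordered
list product since matrices a priori need not commute.) -/
theorem stmt_9 (m : ℕ) (hm : 1 ≤ m) (n : ℕ) (hn : n = 2 * m)
    (a : ℕ → ℕ) (ha : ∀ i, 1 ≤ i → i ≤ n → 2 ≤ a i)
    (p : Polynomial ℚ)
    (hp : algebraMap (Polynomial ℚ) (RatFunc ℚ) p = chainPhi a n)
    (c : ℕ → ℚ)
    (hc : ∀ i, c i = PowerSeries.coeff i ((p : PowerSeries ℚ)⁻¹)) :
    ((List.range m).map (fun k =>
        ∑ j ∈ Finset.range (a (2 * k + 1)),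
          (nilpN (chainMu a n).toNat) ^ (j * chainD a (2 * k)))).prod
      = chiMat (chainMu a n).toNat c ∧
    Polynomial.aeval (nilpN (chainMu a n).toNat) p *
        ((List.range m).map (fun k =>
          ∑ j ∈ Finset.range (a (2 * k + 1)),
            (nilpN (chainMu a n).toNat) ^ (j * chainD a (2 * k)))).prod
      = 1 :=
  stmt_9_general m n hn a ha p hp c hc
end
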